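/- For every integer j ≥ 0: f_j = φ_{1,j}(f_{j+1}), and 1 − 1/σ̲_j ≤ f_j ≤ 1 − 1/σ̄_j (with the conventions 1/∞ = 0). -/

import Mathlib

open MeasureTheory ProbabilityTheory Filter Set
open scoped ENNReal NNReal Topology Classical

noncomputable section

variable {m : ℕ → ℕ}

/-- Generating function `φ_{1,j}` of the `j`-th offspring distribution `ν1 j`. -/
def phiFn1 (m : ℕ → ℕ) (ν1 : ∀ j : ℕ, Measure (Fin (m j) → Bool)) (j : ℕ) (z : ℝ) : ℝ :=
  ∫ x, z ^ (Finset.univ.filter fun k : Fin (m j) => x k = true).card ∂ν1 j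

/-- The composition `φ_{1,j} ∘ … ∘ φ_{1,j+n}`. -/
def phiComp1 (m : ℕ → ℕ) (ν1 : ∀ j : ℕ, Measure (Fin (m j) → Bool)) : ℕ → ℕ → ℝ → ℝ
  | j, 0, z => phiFn1 m ν1 j z
  | j, n + 1, z => phiFn1 m ν1 j (phiComp1 m ν1 (j + 1) n z)

/-- The extinction probability `f_j = lim ↑ φ_{1,j} ∘ … ∘ φ_{1,j+n}(0)`. -/
def fExt1 (m : ℕ → ℕ) (ν1 : ∀ j : ℕ, Measure (Fin (m j) → Bool)) (j : ℕ) : ℝ :=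
  ⨆ n : ℕ, phiComp1 m ν1 j n 0

/-- `φ'_{1,n}(1)` as an extended nonnegative real. -/
def Dcoef1 (m : ℕ → ℕ) (ν1 : ∀ j : ℕ, Measure (Fin (m j) → Bool)) (n : ℕ) : ℝ≥0∞ :=
  ENNReal.ofReal (deriv (phiFn1 m ν1 n) 1)

/-- The quantity `σ̲_j`. -/
def sigmaLow1 (m : ℕ → ℕ) (ν1 : ∀ j : ℕ, Measure (Fin (m j) → Bool)) (j : ℕ) : ℝ≥0∞ :=
  max 1
    ((∑' n : ℕ,
        ENNReal.ofReal (deriv (phiFn1 m ν1 (j + n)) 1 + phiFn1 m ν1 (j + n) 0 - 1) /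
          (Dcoef1 m ν1 (j + n) * ∏ ℓ ∈ Finset.Icc j (j + n), Dcoef1 m ν1 ℓ)) +
      limsup (fun n : ℕ => (∏ ℓ ∈ Finset.Icc j n, Dcoef1 m ν1 ℓ)⁻¹) atTop)

/-- The quantity `σ̄_j`. -/
def sigmaHigh1 (m : ℕ → ℕ) (ν1 : ∀ j : ℕ, Measure (Fin (m j) → Bool)) (j : ℕ) : ℝ≥0∞ :=
  (∑' n : ℕ,
      ENNReal.ofReal (deriv (deriv (phiFn1 m ν1 (j + n))) 1) /
        (Dcoef1 m ν1 (j + n) * ∏ ℓ ∈ Finset.Icc j (j + n), Dcoef1 m ν1 ℓ)) +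
    liminf (fun n : ℕ => (∏ ℓ ∈ Finset.Icc j n, Dcoef1 m ν1 ℓ)⁻¹) atTop

/-!
For a generating function `φ` with `M = φ'(1)` and `V = φ''(1)`, put
`A(s) = (1 - φ(s)) / (1 - s)` and `B(s) = (M - A(s)) / (1 - s)`. Then
`1 / (1 - φ(s)) = 1 / (M (1 - s)) + B(s) / (A(s) M)`, and since `M + φ(0) - 1 ≤ B(s)`, `A(s) ≤ M`
and `M B(s) ≤ V A(s)` (a Chebyshev-type inequality between the coefficients of `A` and `B`), the
last term lies between `(M + φ(0) - 1) / M²` and `V / M²`. Thus `1 / (1 - φ_{1,j}(s))` is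
bounded above and below by affine functions of `1 / (1 - s)`. Along
`φ_{1,j} ∘ … ∘ φ_{1,j+n}(0)` these affine maps compose to partial sums of `σ̄_j` and `σ̲_j`, and
letting `n → ∞` bounds `1 / (1 - f_j)` on both sides.
-/

open Finset

section GeomPartial

variable {s : ℝ}

def geomPartial (s : ℝ) (k : ℕ) : ℝ := ∑ i ∈ range k, s ^ i

def geomPartialSum (s : ℝ) (k : ℕ) : ℝ := ∑ i ∈ range k, geomPartial s i

lemma geomPartial_succ (k : ℕ) : geomPartial s (k + 1) = geomPartial s k + s ^ k :=
  sum_range_succ _ _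

lemma geomPartialSum_succ (k : ℕ) :
    geomPartialSum s (k + 1) = geomPartialSum s k + geomPartial s k :=
  sum_range_succ _ _

lemma geomPartial_nonneg (hs : 0 ≤ s) (k : ℕ) : 0 ≤ geomPartial s k :=
  sum_nonneg fun i _ => pow_nonneg hs i

lemma geomPartialSum_nonneg (hs : 0 ≤ s) (k : ℕ) : 0 ≤ geomPartialSum s k :=
  sum_nonneg fun i _ => geomPartial_nonneg hs i

lemma geomPartial_le (hs0 : 0 ≤ s) (hs1 : s ≤ 1) (k : ℕ) : geomPartial s k ≤ k := by
  simpa [geomPartial] using sum_le_sum fun i (_ : i ∈ range k) => pow_le_one₀ hs0 hs1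

lemma one_le_geomPartial (hs : 0 ≤ s) {k : ℕ} (hk : k ≠ 0) : 1 ≤ geomPartial s k := by
  obtain ⟨k, rfl⟩ := Nat.exists_eq_succ_of_ne_zero hk
  rw [geomPartial, sum_range_succ', pow_zero, le_add_iff_nonneg_left]
  exact sum_nonneg fun i _ => pow_nonneg hs _

lemma one_sub_mul_geomPartial (k : ℕ) : (1 - s) * geomPartial s k = 1 - s ^ k :=
  mul_neg_geom_sum s k

lemma natCast_sub_geomPartial (k : ℕ) : k - geomPartial s k = (1 - s) * geomPartialSum s k := by
  induction k with
  | zero => simp [geomPartial, geomPartialSum]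
  | succ k ih =>
    rw [geomPartial_succ, geomPartialSum_succ, mul_add, ← ih, one_sub_mul_geomPartial]
    push_cast
    ring

lemma geomPartialSum_le (hs : 0 ≤ s) (k : ℕ) :
    geomPartialSum s k ≤ (k - 1) * geomPartial s k := by
  induction k with
  | zero => simp [geomPartial, geomPartialSum]
  | succ k ih =>
    rw [geomPartialSum_succ, geomPartial_succ]
    push_cast
    nlinarith [pow_nonneg hs k, geomPartial_nonneg hs k]

lemma natCast_sub_one_le_geomPartialSum (hs : 0 ≤ s) (k : ℕ) :
    (k : ℝ) - 1 ≤ geomPartialSum s k := by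
  induction k with
  | zero => simp [geomPartialSum]
  | succ k ih =>
    rw [geomPartialSum_succ]
    rcases eq_or_ne k 0 with rfl | hk
    · simp [geomPartialSum, geomPartial]
    · push_cast
      linarith [one_le_geomPartial hs hk]

lemma mul_geomPartial_le (hs0 : 0 ≤ s) (hs1 : s ≤ 1) {l k : ℕ} (hlk : l ≤ k) :
    l * geomPartial s k ≤ k * geomPartial s l := by
  induction k, hlk using Nat.le_induction with
  | base => rfl
  | succ k hlk ih =>
    have hpow : (l : ℝ) * s ^ k ≤ geomPartial s l := by
      simpa [geomPartial] using sum_le_sum fun i (hi : i ∈ range l) =>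
        pow_le_pow_of_le_one hs0 hs1 (by simp at hi; omega : i ≤ k)
    rw [geomPartial_succ]
    push_cast
    linarith

lemma geomPartialSum_pair_le_of_le (hs0 : 0 ≤ s) (hs1 : s ≤ 1) {l k : ℕ} (hlk : l ≤ k) :
    l * geomPartialSum s k + k * geomPartialSum s l ≤
      k * (k - 1) * geomPartial s l + l * (l - 1) * geomPartial s k := by
  have hk := geomPartialSum_le hs0 k
  have hl := geomPartialSum_le hs0 l
  have hmul := mul_geomPartial_le hs0 hs1 hlk
  have hlk' : (l : ℝ) ≤ k := by exact_mod_cast hlk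
  nlinarith [mul_le_mul_of_nonneg_left hk (Nat.cast_nonneg l),
    mul_le_mul_of_nonneg_left hl (Nat.cast_nonneg k),
    mul_le_mul_of_nonneg_left hmul (sub_nonneg.2 hlk')]

lemma geomPartialSum_pair_le (hs0 : 0 ≤ s) (hs1 : s ≤ 1) (l k : ℕ) :
    l * geomPartialSum s k + k * geomPartialSum s l ≤
      k * (k - 1) * geomPartial s l + l * (l - 1) * geomPartial s k := by
  rcases le_total l k with hlk | hkl
  · exact geomPartialSum_pair_le_of_le hs0 hs1 hlk
  · linarith [geomPartialSum_pair_le_of_le hs0 hs1 hkl]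

end GeomPartial

section InvOneSub

/-- `1 / (1 - x)` in `ℝ≥0∞`, equal to `∞` for `x ≥ 1`. -/
def invOneSub (x : ℝ) : ℝ≥0∞ := (ENNReal.ofReal (1 - x))⁻¹

def affineBound (a d y : ℝ≥0∞) : ℝ≥0∞ := a / (d * d) + d⁻¹ * y

lemma invOneSub_of_lt_one {x : ℝ} (hx : x < 1) : invOneSub x = ENNReal.ofReal (1 - x)⁻¹ :=
  (ENNReal.ofReal_inv_of_pos (by linarith)).symm

@[simp] lemma invOneSub_one : invOneSub 1 = ⊤ := by simp [invOneSub]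

@[simp] lemma invOneSub_zero : invOneSub 0 = 1 := by simp [invOneSub]

lemma invOneSub_ne_zero (x : ℝ) : invOneSub x ≠ 0 := by simp [invOneSub]

lemma continuous_invOneSub : Continuous invOneSub :=
  continuous_inv.comp (ENNReal.continuous_ofReal.comp (continuous_const.sub continuous_id))

lemma affineBound_mono (a d : ℝ≥0∞) : Monotone (affineBound a d) :=
  fun _ _ h => by unfold affineBound; gcongr

lemma affineBound_zero_left {a y : ℝ≥0∞} (hy : y ≠ 0) : affineBound a 0 y = ⊤ := by
  simp [affineBound, hy]

lemma affineBound_top {a d : ℝ≥0∞} (hd : d ≠ ⊤) : affineBound a d ⊤ = ⊤ := by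
  simp [affineBound, hd]

lemma affineBound_ofReal {a d y : ℝ} (ha : 0 ≤ a) (hd : 0 < d) (hy : 0 ≤ y) :
    affineBound (.ofReal a) (.ofReal d) (.ofReal y) = .ofReal (a / (d * d) + d⁻¹ * y) := by
  rw [affineBound, ENNReal.ofReal_add (by positivity) (by positivity),
    ENNReal.ofReal_div_of_pos (by positivity), ENNReal.ofReal_mul hd.le,
    ENNReal.ofReal_mul (by positivity), ENNReal.ofReal_inv_of_pos hd]

end InvOneSub


section FinitePGF

variable {ι : Type*} [Fintype ι] (w : ι → ℝ) (c : ι → ℕ)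

def pgf (z : ℝ) : ℝ := ∑ i, w i * z ^ c i

def pgfMean : ℝ := ∑ i, w i * c i

def pgfFactorialMoment : ℝ := ∑ i, w i * (c i * (c i - 1 : ℝ))

/-- `pgfSlope w c s = (1 - pgf w c s) / (1 - s)` and
`pgfSlopeGap w c s = (pgfMean w c - pgfSlope w c s) / (1 - s)`, written without division. -/
def pgfSlope (s : ℝ) : ℝ := ∑ i, w i * geomPartial s (c i)

def pgfSlopeGap (s : ℝ) : ℝ := ∑ i, w i * geomPartialSum s (c i)

lemma hasDerivAt_pgf (z : ℝ) : HasDerivAt (pgf w c) (∑ i, w i * (c i * z ^ (c i - 1))) z :=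
  HasDerivAt.fun_sum fun i _ => (hasDerivAt_pow (c i) z).const_mul (w i)

lemma continuous_pgf : Continuous (pgf w c) :=
  continuous_iff_continuousAt.2 fun z => (hasDerivAt_pgf w c z).continuousAt

lemma deriv_pgf_one : deriv (pgf w c) 1 = pgfMean w c := by
  simp [(hasDerivAt_pgf w c 1).deriv, pgfMean]

lemma deriv_deriv_pgf_one : deriv (deriv (pgf w c)) 1 = pgfFactorialMoment w c := by
  have hderiv : deriv (pgf w c) = fun z => ∑ i, w i * (c i * z ^ (c i - 1)) :=
    funext fun z => (hasDerivAt_pgf w c z).deriv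
  have h2 : HasDerivAt (deriv (pgf w c))
      (∑ i, w i * (c i * ((c i - 1 : ℕ) * (1 : ℝ) ^ (c i - 1 - 1)))) 1 := by
    rw [hderiv]
    exact HasDerivAt.fun_sum fun i _ =>
      ((hasDerivAt_pow (c i - 1) 1).const_mul (c i : ℝ)).const_mul (w i)
  rw [h2.deriv, pgfFactorialMoment]
  refine sum_congr rfl fun i _ => ?_
  rcases Nat.eq_zero_or_pos (c i) with h | h
  · simp [h]
  · simp [Nat.cast_sub h]

variable {w c} (hw : ∀ i, 0 ≤ w i) (h1 : ∑ i, w i = 1)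
include hw

lemma pgfMean_nonneg : 0 ≤ pgfMean w c :=
  sum_nonneg fun i _ => mul_nonneg (hw i) (Nat.cast_nonneg _)

lemma pgfFactorialMoment_nonneg : 0 ≤ pgfFactorialMoment w c :=
  sum_nonneg fun i _ => mul_nonneg (hw i) (by
    rcases Nat.eq_zero_or_pos (c i) with h | h
    · simp [h]
    · exact mul_nonneg (Nat.cast_nonneg _) (sub_nonneg.2 (by exact_mod_cast h)))

lemma pgf_nonneg {z : ℝ} (hz : 0 ≤ z) : 0 ≤ pgf w c z :=
  sum_nonneg fun i _ => mul_nonneg (hw i) (pow_nonneg hz _)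

lemma pgf_mono {x y : ℝ} (hx : 0 ≤ x) (hxy : x ≤ y) : pgf w c x ≤ pgf w c y :=
  sum_le_sum fun i _ => mul_le_mul_of_nonneg_left (pow_le_pow_left₀ hx hxy _) (hw i)

lemma pgfSlope_le_pgfMean {s : ℝ} (hs0 : 0 ≤ s) (hs1 : s ≤ 1) :
    pgfSlope w c s ≤ pgfMean w c :=
  sum_le_sum fun i _ => mul_le_mul_of_nonneg_left (geomPartial_le hs0 hs1 _) (hw i)

lemma pgfSlope_pos (hM : 0 < pgfMean w c) {s : ℝ} (hs : 0 ≤ s) : 0 < pgfSlope w c s := by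
  obtain ⟨i, -, hi⟩ := exists_lt_of_sum_lt (by simpa [pgfMean] using hM :
    ∑ i : ι, (0 : ℝ) < ∑ i, w i * c i)
  have hci : c i ≠ 0 := by rintro h; simp [h] at hi
  have hwi : 0 < w i := pos_of_mul_pos_left hi (Nat.cast_nonneg _)
  refine sum_pos' (fun j _ => mul_nonneg (hw j) (geomPartial_nonneg hs _)) ⟨i, mem_univ i, ?_⟩
  exact mul_pos hwi (one_pos.trans_le (one_le_geomPartial hs hci))

lemma pgfSlopeGap_nonneg {s : ℝ} (hs : 0 ≤ s) : 0 ≤ pgfSlopeGap w c s :=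
  sum_nonneg fun i _ => mul_nonneg (hw i) (geomPartialSum_nonneg hs _)

omit hw in
include h1 in
lemma pgf_one : pgf w c 1 = 1 := by simp [pgf, h1]

include h1 in
lemma pgf_le_one {z : ℝ} (hz0 : 0 ≤ z) (hz1 : z ≤ 1) : pgf w c z ≤ 1 :=
  pgf_one h1 (c := c) ▸ pgf_mono hw hz0 hz1

include h1 in
lemma pgf_eq_one_of_pgfMean_eq_zero (hM : pgfMean w c = 0) (z : ℝ) : pgf w c z = 1 := by
  have hzero :=
    (sum_eq_zero_iff_of_nonneg fun i _ => mul_nonneg (hw i) (Nat.cast_nonneg (c i))).1 hM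
  rw [← h1, pgf]
  refine sum_congr rfl fun i hi => ?_
  rcases mul_eq_zero.1 (hzero i hi) with h | h
  · simp [h]
  · simp [Nat.cast_eq_zero.1 h]

omit hw in
include h1 in
lemma one_sub_pgf (s : ℝ) : 1 - pgf w c s = (1 - s) * pgfSlope w c s := by
  rw [pgf, pgfSlope, mul_sum]
  nth_rewrite 1 [← h1]
  rw [← sum_sub_distrib]
  refine sum_congr rfl fun i _ => ?_
  linear_combination (-w i) * one_sub_mul_geomPartial (s := s) (c i)

omit hw in
lemma pgfMean_sub_pgfSlope (s : ℝ) :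
    pgfMean w c - pgfSlope w c s = (1 - s) * pgfSlopeGap w c s := by
  rw [pgfMean, pgfSlope, pgfSlopeGap, mul_sum, ← sum_sub_distrib]
  refine sum_congr rfl fun i _ => ?_
  linear_combination w i * natCast_sub_geomPartial (s := s) (c i)

include h1 in
lemma pgfMean_add_pgf_zero_sub_one_le {s : ℝ} (hs : 0 ≤ s) :
    pgfMean w c + pgf w c 0 - 1 ≤ pgfSlopeGap w c s := by
  have : pgfMean w c + pgf w c 0 - 1 = ∑ i, w i * (c i + 0 ^ c i - 1) := by
    simp only [pgfMean, pgf, mul_sub, mul_add, mul_one, sum_sub_distrib, sum_add_distrib, h1]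
  rw [this]
  refine sum_le_sum fun i _ => mul_le_mul_of_nonneg_left ?_ (hw i)
  rcases eq_or_ne (c i) 0 with h | h
  · simp [h, geomPartialSum]
  · simpa [zero_pow h] using natCast_sub_one_le_geomPartialSum hs (c i)

lemma pgfMean_mul_pgfSlopeGap_le {s : ℝ} (hs0 : 0 ≤ s) (hs1 : s ≤ 1) :
    pgfMean w c * pgfSlopeGap w c s ≤ pgfFactorialMoment w c * pgfSlope w c s := by
  have hsymm : ∀ u v : ι → ℝ,
      (∑ i, u i) * (∑ j, v j) = (∑ i, ∑ j, (u i * v j + u j * v i)) / 2 := fun u v => by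
    simp only [sum_mul_sum, sum_add_distrib]
    rw [sum_comm (f := fun i j => u j * v i)]
    ring
  rw [pgfMean, pgfSlopeGap, pgfFactorialMoment, pgfSlope, hsymm, hsymm]
  refine div_le_div_of_nonneg_right (sum_le_sum fun i _ => sum_le_sum fun j _ => ?_) two_pos.le
  have := mul_le_mul_of_nonneg_left (geomPartialSum_pair_le hs0 hs1 (c i) (c j))
    (mul_nonneg (hw i) (hw j))
  linarith

include h1 in
lemma inv_one_sub_pgf (hM : 0 < pgfMean w c) {s : ℝ} (hs0 : 0 ≤ s) (hs1 : s < 1) :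
    (1 - pgf w c s)⁻¹ =
      pgfSlopeGap w c s / (pgfSlope w c s * pgfMean w c) + (pgfMean w c)⁻¹ * (1 - s)⁻¹ := by
  have hA := pgfSlope_pos hw hM hs0
  have hgap := pgfMean_sub_pgfSlope (w := w) (c := c) s
  have hs : 1 - s ≠ 0 := by linarith
  rw [one_sub_pgf h1]
  field_simp
  linear_combination hgap

include h1 in
lemma inv_one_sub_pgf_le (hM : 0 < pgfMean w c) {s : ℝ} (hs0 : 0 ≤ s) (hs1 : s < 1) :
    (1 - pgf w c s)⁻¹ ≤
      pgfFactorialMoment w c / (pgfMean w c * pgfMean w c) + (pgfMean w c)⁻¹ * (1 - s)⁻¹ := by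
  have hA := pgfSlope_pos hw hM hs0
  rw [inv_one_sub_pgf hw h1 hM hs0 hs1, add_le_add_iff_right,
    div_le_div_iff₀ (by positivity) (by positivity)]
  nlinarith [pgfMean_mul_pgfSlopeGap_le hw (c := c) hs0 hs1.le]

include h1 in
lemma le_inv_one_sub_pgf (hM : 0 < pgfMean w c) {s : ℝ} (hs0 : 0 ≤ s) (hs1 : s < 1) :
    max 0 (pgfMean w c + pgf w c 0 - 1) / (pgfMean w c * pgfMean w c) +
      (pgfMean w c)⁻¹ * (1 - s)⁻¹ ≤ (1 - pgf w c s)⁻¹ := by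
  have hA := pgfSlope_pos hw hM hs0
  have hLB : max 0 (pgfMean w c + pgf w c 0 - 1) ≤ pgfSlopeGap w c s :=
    max_le (pgfSlopeGap_nonneg hw hs0) (pgfMean_add_pgf_zero_sub_one_le hw h1 hs0)
  rw [inv_one_sub_pgf hw h1 hM hs0 hs1, add_le_add_iff_right,
    div_le_div_iff₀ (by positivity) (by positivity)]
  have := mul_le_mul hLB (pgfSlope_le_pgfMean hw hs0 hs1.le) hA.le (pgfSlopeGap_nonneg hw hs0)
  nlinarith

include h1 in
lemma pgf_lt_one (hM : 0 < pgfMean w c) {s : ℝ} (hs0 : 0 ≤ s) (hs1 : s < 1) :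
    pgf w c s < 1 := by
  have := one_sub_pgf h1 (c := c) s
  nlinarith [pgfSlope_pos hw hM hs0]

include h1 in
lemma invOneSub_pgf_le {s : ℝ} (hs0 : 0 ≤ s) (hs1 : s ≤ 1) :
    invOneSub (pgf w c s) ≤
      affineBound (.ofReal (pgfFactorialMoment w c)) (.ofReal (pgfMean w c)) (invOneSub s) := by
  rcases (pgfMean_nonneg (c := c) hw).eq_or_lt with hM | hM
  · simp [← hM, affineBound_zero_left (invOneSub_ne_zero s)]
  rcases hs1.eq_or_lt with rfl | hs1
  · simp [affineBound_top]
  rw [invOneSub_of_lt_one (pgf_lt_one hw h1 hM hs0 hs1), invOneSub_of_lt_one hs1,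
    affineBound_ofReal (pgfFactorialMoment_nonneg hw) hM (inv_nonneg.2 (by linarith))]
  exact ENNReal.ofReal_le_ofReal (inv_one_sub_pgf_le hw h1 hM hs0 hs1)

include h1 in
lemma affineBound_le_invOneSub_pgf {s : ℝ} (hs0 : 0 ≤ s) (hs1 : s ≤ 1) :
    affineBound (.ofReal (pgfMean w c + pgf w c 0 - 1)) (.ofReal (pgfMean w c)) (invOneSub s) ≤
      invOneSub (pgf w c s) := by
  rcases (pgfMean_nonneg (c := c) hw).eq_or_lt with hM | hM
  · simp [pgf_eq_one_of_pgfMean_eq_zero (c := c) hw h1 hM.symm]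
  rcases hs1.eq_or_lt with rfl | hs1
  · simp [pgf_one h1]
  have hmax : ENNReal.ofReal (pgfMean w c + pgf w c 0 - 1) =
      .ofReal (max 0 (pgfMean w c + pgf w c 0 - 1)) := by simp
  rw [invOneSub_of_lt_one (pgf_lt_one hw h1 hM hs0 hs1), invOneSub_of_lt_one hs1, hmax,
    affineBound_ofReal (le_max_left _ _) hM (inv_nonneg.2 (by linarith))]
  exact ENNReal.ofReal_le_ofReal (le_inv_one_sub_pgf hw h1 hM hs0 hs1)


end FinitePGF

section Telescoping

variable (x d : ℕ → ℝ≥0∞)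

def partialSigma (j n : ℕ) : ℝ≥0∞ :=
  ∑ k ∈ range (n + 1), x (j + k) / (d (j + k) * ∏ ℓ ∈ Icc j (j + k), d ℓ) +
    (∏ ℓ ∈ Icc j (j + n), d ℓ)⁻¹

variable {x d}

lemma partialSigma_zero (j : ℕ) : partialSigma x d j 0 = affineBound (x j) (d j) 1 := by
  simp [partialSigma, affineBound]

lemma partialSigma_succ (hd : ∀ ℓ, d ℓ ≠ ⊤) (j n : ℕ) :
    partialSigma x d j (n + 1) = affineBound (x j) (d j) (partialSigma x d (j + 1) n) := by
  have mul_inv : ∀ {u v : ℝ≥0∞}, u ≠ ⊤ → v ≠ ⊤ → (u * v)⁻¹ = u⁻¹ * v⁻¹ :=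
    fun hu hv => ENNReal.mul_inv (Or.inr hv) (Or.inl hu)
  have prod_ne_top : ∀ i r, ∏ ℓ ∈ Icc i r, d ℓ ≠ ⊤ :=
    fun i r => ENNReal.prod_ne_top fun ℓ _ => hd ℓ
  have inv_prod : ∀ k, (∏ ℓ ∈ Icc j (j + (k + 1)), d ℓ)⁻¹ =
      (d j)⁻¹ * (∏ ℓ ∈ Icc (j + 1) (j + 1 + k), d ℓ)⁻¹ := fun k => by
    rw [show j + (k + 1) = j + 1 + k by omega, ← mul_prod_Ioc_eq_prod_Icc (by omega),
      ← Finset.Icc_add_one_left_eq_Ioc, mul_inv (hd j) (prod_ne_top _ _)]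
  have term : ∀ k, x (j + (k + 1)) / (d (j + (k + 1)) * ∏ ℓ ∈ Icc j (j + (k + 1)), d ℓ) =
      (d j)⁻¹ * (x (j + 1 + k) / (d (j + 1 + k) * ∏ ℓ ∈ Icc (j + 1) (j + 1 + k), d ℓ)) :=
    fun k => by
      rw [div_eq_mul_inv, div_eq_mul_inv, mul_inv (hd _) (prod_ne_top _ _),
        mul_inv (hd _) (prod_ne_top _ _), inv_prod, show j + (k + 1) = j + 1 + k by omega]
      ring
  rw [partialSigma, partialSigma, affineBound, sum_range_succ', mul_add, mul_sum, inv_prod]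
  simp only [term, add_zero, Finset.Icc_self, Finset.prod_singleton]
  ring

lemma le_partialSigma (hd : ∀ ℓ, d ℓ ≠ ⊤) {T : ℕ → ℕ → ℝ≥0∞}
    (h0 : ∀ j, T j 0 ≤ affineBound (x j) (d j) 1)
    (hsucc : ∀ j n, T j (n + 1) ≤ affineBound (x j) (d j) (T (j + 1) n)) (j n : ℕ) :
    T j n ≤ partialSigma x d j n := by
  induction n generalizing j with
  | zero => exact partialSigma_zero j ▸ h0 j
  | succ n ih =>
    rw [partialSigma_succ hd]
    exact (hsucc j n).trans (affineBound_mono _ _ (ih (j + 1)))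

lemma partialSigma_le (hd : ∀ ℓ, d ℓ ≠ ⊤) {T : ℕ → ℕ → ℝ≥0∞}
    (h0 : ∀ j, affineBound (x j) (d j) 1 ≤ T j 0)
    (hsucc : ∀ j n, affineBound (x j) (d j) (T (j + 1) n) ≤ T j (n + 1)) (j n : ℕ) :
    partialSigma x d j n ≤ T j n := by
  induction n generalizing j with
  | zero => exact partialSigma_zero j ▸ h0 j
  | succ n ih =>
    rw [partialSigma_succ hd]
    exact (affineBound_mono _ _ (ih (j + 1))).trans (hsucc j n)

lemma liminf_partialSigma_le (j : ℕ) :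
    liminf (partialSigma x d j) atTop ≤
      (∑' n, x (j + n) / (d (j + n) * ∏ ℓ ∈ Icc j (j + n), d ℓ)) +
        liminf (fun n => (∏ ℓ ∈ Icc j n, d ℓ)⁻¹) atTop := by
  set t := fun k => x (j + k) / (d (j + k) * ∏ ℓ ∈ Icc j (j + k), d ℓ)
  set u := fun n => (∏ ℓ ∈ Icc j n, d ℓ)⁻¹
  calc liminf (partialSigma x d j) atTop
      ≤ liminf (fun n => (∑' k, t k) + u (n + j)) atTop := by
        refine liminf_le_liminf (Eventually.of_forall fun n => ?_)
        rw [partialSigma, add_comm n j]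
        exact add_le_add (ENNReal.sum_le_tsum _) le_rfl
    _ = _ := by
        rw [liminf_const_add _ _ _ (by isBoundedDefault) (by isBoundedDefault), liminf_nat_add]

lemma le_limsup_partialSigma (j : ℕ) :
    (∑' n, x (j + n) / (d (j + n) * ∏ ℓ ∈ Icc j (j + n), d ℓ)) +
        limsup (fun n => (∏ ℓ ∈ Icc j n, d ℓ)⁻¹) atTop ≤
      limsup (partialSigma x d j) atTop := by
  set t := fun k => x (j + k) / (d (j + k) * ∏ ℓ ∈ Icc j (j + k), d ℓ)
  set u := fun n => (∏ ℓ ∈ Icc j n, d ℓ)⁻¹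
  rw [ENNReal.tsum_eq_iSup_nat, ENNReal.iSup_add]
  refine iSup_le fun N => ?_
  calc (∑ k ∈ range N, t k) + limsup u atTop
      = limsup (fun n => (∑ k ∈ range N, t k) + u (n + j)) atTop := by
        rw [limsup_const_add _ _ _ (by isBoundedDefault) (by isBoundedDefault), limsup_nat_add]
    _ ≤ limsup (partialSigma x d j) atTop := by
        refine limsup_le_limsup (eventually_ge_atTop N |>.mono fun n hn => ?_)
        dsimp only [u]
        rw [partialSigma, add_comm n j]
        exact add_le_add (sum_le_sum_of_subset (range_subset_range.2 (by omega))) le_rfl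

end Telescoping

lemma one_sub_toReal_inv_le {σ : ℝ≥0∞} {f : ℝ} (hσ : 1 ≤ σ) (hf : f ≤ 1)
    (h : σ ≤ invOneSub f) : 1 - σ⁻¹.toReal ≤ f := by
  have hle : ENNReal.ofReal (1 - f) ≤ σ⁻¹ := by
    simpa [invOneSub] using ENNReal.inv_le_inv.2 h
  have := ENNReal.toReal_mono (ENNReal.inv_ne_top.2 (one_pos.trans_le hσ).ne') hle
  rw [ENNReal.toReal_ofReal (by linarith)] at this
  linarith

lemma le_one_sub_toReal_inv {σ : ℝ≥0∞} {f : ℝ} (hf : f ≤ 1) (h : invOneSub f ≤ σ) :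
    f ≤ 1 - σ⁻¹.toReal := by
  have := ENNReal.toReal_mono ENNReal.ofReal_ne_top (ENNReal.inv_le_iff_inv_le.2 h)
  rw [ENNReal.toReal_ofReal (by linarith)] at this
  linarith

section Offspring

variable (m : ℕ → ℕ) (ν1 : ∀ j : ℕ, Measure (Fin (m j) → Bool))
  [∀ j, IsProbabilityMeasure (ν1 j)]

lemma phiFn1_eq_pgf (n : ℕ) :
    phiFn1 m ν1 n =
      pgf (fun x => (ν1 n).real {x}) fun x => (univ.filter fun k => x k = true).card := by
  ext z
  rw [phiFn1, integral_fintype .of_finite, pgf]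
  rfl

variable {m ν1}

lemma phiFn1_mem_Icc (n : ℕ) {z : ℝ} (hz : z ∈ Set.Icc 0 1) :
    phiFn1 m ν1 n z ∈ Set.Icc 0 1 := by
  rw [phiFn1_eq_pgf]
  exact ⟨pgf_nonneg (fun _ => measureReal_nonneg) hz.1,
    pgf_le_one (fun _ => measureReal_nonneg) (by simp) hz.1 hz.2⟩

lemma phiFn1_mono (n : ℕ) {x y : ℝ} (hx : 0 ≤ x) (hxy : x ≤ y) :
    phiFn1 m ν1 n x ≤ phiFn1 m ν1 n y := by
  rw [phiFn1_eq_pgf]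
  exact pgf_mono (fun _ => measureReal_nonneg) hx hxy

lemma continuous_phiFn1 (n : ℕ) : Continuous (phiFn1 m ν1 n) := by
  rw [phiFn1_eq_pgf]
  exact continuous_pgf _ _

lemma invOneSub_phiFn1_le (n : ℕ) {s : ℝ} (hs : s ∈ Set.Icc 0 1) :
    invOneSub (phiFn1 m ν1 n s) ≤
      affineBound (.ofReal (deriv (deriv (phiFn1 m ν1 n)) 1)) (Dcoef1 m ν1 n) (invOneSub s) := by
  rw [Dcoef1, phiFn1_eq_pgf, deriv_pgf_one, deriv_deriv_pgf_one]
  exact invOneSub_pgf_le (fun _ => measureReal_nonneg) (by simp) hs.1 hs.2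

lemma affineBound_le_invOneSub_phiFn1 (n : ℕ) {s : ℝ} (hs : s ∈ Set.Icc 0 1) :
    affineBound (.ofReal (deriv (phiFn1 m ν1 n) 1 + phiFn1 m ν1 n 0 - 1)) (Dcoef1 m ν1 n)
      (invOneSub s) ≤ invOneSub (phiFn1 m ν1 n s) := by
  rw [Dcoef1, phiFn1_eq_pgf, deriv_pgf_one]
  exact affineBound_le_invOneSub_pgf (fun _ => measureReal_nonneg) (by simp) hs.1 hs.2

end Offspring

section Extinction

variable {m : ℕ → ℕ} {ν1 : ∀ j : ℕ, Measure (Fin (m j) → Bool)}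
  [∀ j, IsProbabilityMeasure (ν1 j)]

lemma phiComp1_mem_Icc (j n : ℕ) : phiComp1 m ν1 j n 0 ∈ Set.Icc 0 1 := by
  induction n generalizing j with
  | zero => exact phiFn1_mem_Icc j ⟨le_rfl, zero_le_one⟩
  | succ n ih => exact phiFn1_mem_Icc j (ih (j + 1))

lemma phiComp1_le_succ (j n : ℕ) : phiComp1 m ν1 j n 0 ≤ phiComp1 m ν1 j (n + 1) 0 := by
  induction n generalizing j with
  | zero => exact phiFn1_mono j le_rfl (phiComp1_mem_Icc (j + 1) 0).1
  | succ n ih => exact phiFn1_mono j (phiComp1_mem_Icc (j + 1) n).1 (ih (j + 1))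

lemma tendsto_phiComp1 (j : ℕ) :
    Tendsto (fun n => phiComp1 m ν1 j n 0) atTop (𝓝 (fExt1 m ν1 j)) :=
  tendsto_atTop_ciSup (monotone_nat_of_le_succ (phiComp1_le_succ j))
    ⟨1, Set.forall_mem_range.2 fun n => (phiComp1_mem_Icc j n).2⟩

lemma fExt1_mem_Icc (j : ℕ) : fExt1 m ν1 j ∈ Set.Icc 0 1 :=
  isClosed_Icc.mem_of_tendsto (tendsto_phiComp1 j)
    (Eventually.of_forall (phiComp1_mem_Icc j))

lemma fExt1_eq_phiFn1 (j : ℕ) : fExt1 m ν1 j = phiFn1 m ν1 j (fExt1 m ν1 (j + 1)) :=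
  tendsto_nhds_unique ((tendsto_phiComp1 j).comp (tendsto_add_atTop_nat 1))
    (((continuous_phiFn1 j).tendsto _).comp (tendsto_phiComp1 (j + 1)))

lemma invOneSub_phiComp1_le (j n : ℕ) :
    invOneSub (phiComp1 m ν1 j n 0) ≤
      partialSigma (fun n => .ofReal (deriv (deriv (phiFn1 m ν1 n)) 1)) (Dcoef1 m ν1) j n :=
  le_partialSigma (T := fun j n => invOneSub (phiComp1 m ν1 j n 0))
    (fun _ => ENNReal.ofReal_ne_top)
    (fun j => invOneSub_zero ▸ invOneSub_phiFn1_le j ⟨le_rfl, zero_le_one⟩)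
    (fun j n => invOneSub_phiFn1_le j (phiComp1_mem_Icc (j + 1) n)) j n

lemma partialSigma_le_invOneSub_phiComp1 (j n : ℕ) :
    partialSigma (fun n => .ofReal (deriv (phiFn1 m ν1 n) 1 + phiFn1 m ν1 n 0 - 1))
      (Dcoef1 m ν1) j n ≤ invOneSub (phiComp1 m ν1 j n 0) :=
  partialSigma_le (T := fun j n => invOneSub (phiComp1 m ν1 j n 0))
    (fun _ => ENNReal.ofReal_ne_top)
    (fun j => invOneSub_zero ▸ affineBound_le_invOneSub_phiFn1 j ⟨le_rfl, zero_le_one⟩)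
    (fun j n => affineBound_le_invOneSub_phiFn1 j (phiComp1_mem_Icc (j + 1) n)) j n

lemma tendsto_invOneSub_phiComp1 (j : ℕ) :
    Tendsto (fun n => invOneSub (phiComp1 m ν1 j n 0)) atTop (𝓝 (invOneSub (fExt1 m ν1 j))) :=
  (continuous_invOneSub.tendsto _).comp (tendsto_phiComp1 j)

lemma invOneSub_fExt1_le_sigmaHigh1 (j : ℕ) : invOneSub (fExt1 m ν1 j) ≤ sigmaHigh1 m ν1 j :=
  calc invOneSub (fExt1 m ν1 j)
      = liminf (fun n => invOneSub (phiComp1 m ν1 j n 0)) atTop :=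
        (tendsto_invOneSub_phiComp1 j).liminf_eq.symm
    _ ≤ liminf (partialSigma _ (Dcoef1 m ν1) j) atTop :=
        liminf_le_liminf (Eventually.of_forall (invOneSub_phiComp1_le j))
    _ ≤ sigmaHigh1 m ν1 j := liminf_partialSigma_le j

lemma sigmaLow1_le_invOneSub_fExt1 (j : ℕ) : sigmaLow1 m ν1 j ≤ invOneSub (fExt1 m ν1 j) := by
  have hf := (fExt1_mem_Icc (ν1 := ν1) j).1
  refine max_le (ENNReal.one_le_inv.2 (ENNReal.ofReal_le_one.2 (by linarith))) ?_
  calc _ ≤ limsup (partialSigma _ (Dcoef1 m ν1) j) atTop := le_limsup_partialSigma j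
    _ ≤ limsup (fun n => invOneSub (phiComp1 m ν1 j n 0)) atTop :=
        limsup_le_limsup (Eventually.of_forall (partialSigma_le_invOneSub_phiComp1 j))
    _ = invOneSub (fExt1 m ν1 j) := (tendsto_invOneSub_phiComp1 j).limsup_eq

end Extinction

theorem stmt8_general
    (m : ℕ → ℕ) (ν1 : ∀ j : ℕ, Measure (Fin (m j) → Bool))
    (hν : ∀ j, IsProbabilityMeasure (ν1 j)) (j : ℕ) :
    fExt1 m ν1 j = phiFn1 m ν1 j (fExt1 m ν1 (j + 1)) ∧
    1 - ((sigmaLow1 m ν1 j)⁻¹).toReal ≤ fExt1 m ν1 j ∧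
    fExt1 m ν1 j ≤ 1 - ((sigmaHigh1 m ν1 j)⁻¹).toReal :=
  ⟨fExt1_eq_phiFn1 j,
    one_sub_toReal_inv_le (le_max_left _ _) (fExt1_mem_Icc j).2
      (sigmaLow1_le_invOneSub_fExt1 j),
    le_one_sub_toReal_inv (fExt1_mem_Icc j).2 (invOneSub_fExt1_le_sigmaHigh1 j)⟩

theorem stmt8
    (m : ℕ → ℕ) (ν1 : ∀ j : ℕ, Measure (Fin (m j) → Bool))
    (hm : ∀ j, 2 ≤ m j) (hν : ∀ j, IsProbabilityMeasure (ν1 j)) (j : ℕ) :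
    fExt1 m ν1 j = phiFn1 m ν1 j (fExt1 m ν1 (j + 1)) ∧
    1 - ((sigmaLow1 m ν1 j)⁻¹).toReal ≤ fExt1 m ν1 j ∧
    fExt1 m ν1 j ≤ 1 - ((sigmaHigh1 m ν1 j)⁻¹).toReal :=
  stmt8_general m ν1 hν j
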